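/- Define F_i(w) := f_i(w − α∇f_i(w)) and F(w) := (1/n)∑_{i=1}^n F_i(w). Then for every α ∈ [0, 1/L] and every w ∈ ℝ^d, (1/n)∑_{i=1}^n ‖∇F_i(w) − ∇F(w)‖² ≤ 3B²α²γ_H² + 192γ_G². -/

import Mathlib

/-!
Compare each `∇F_i(w)` not with `∇F(w)` but with the gradient at `w` of the MAML objective of the
average `f̄`, namely `(I - α∇²f̄(w)) ∇f̄(u)` with `u = w - α∇f̄(w)`: a variance is at most the mean
squared distance to any fixed point. Since `∇F_i(w) = (I - α∇²f_i(w)) ∇f_i(w - α∇f_i(w))`, this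
distance is at most the gradient mismatch `‖∇f_i(w - α∇f_i(w)) - ∇f̄(u)‖` times `‖I - α∇²f_i(w)‖ ≤ 2`,
plus `‖∇f̄(u)‖ ≤ B` times `α‖∇²f_i(w) - ∇²f̄(w)‖`; by `L`-smoothness and `αL ≤ 1` the mismatch is at
most the gradient dissimilarity at `w` plus that at `u`. Squaring and averaging gives
`24γ_G² + 3B²α²γ_H²`.
-/

open InnerProductSpace Finset

theorem sum_add_add_sq_le {ι : Type*} (s : Finset ι) (a b c : ι → ℝ) :
    ∑ i ∈ s, (a i + b i + c i) ^ 2 ≤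
      3 * (∑ i ∈ s, a i ^ 2 + ∑ i ∈ s, b i ^ 2 + ∑ i ∈ s, c i ^ 2) := by
  rw [← sum_add_distrib, ← sum_add_distrib, mul_sum]
  gcongr with i
  nlinarith [sq_nonneg (a i - b i), sq_nonneg (b i - c i), sq_nonneg (a i - c i)]

section Averages

variable {E : Type*} [NormedAddCommGroup E] [InnerProductSpace ℝ E] {ι : Type*} [Fintype ι]

theorem sum_norm_sub_average_sq_le (x : ι → E) (c : E) :
    ∑ i, ‖x i - (1 / (Fintype.card ι : ℝ)) • ∑ j, x j‖ ^ 2 ≤ ∑ i, ‖x i - c‖ ^ 2 := by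
  set m := (1 / (Fintype.card ι : ℝ)) • ∑ j, x j
  have hcentred : ∑ i, (x i - m) = 0 := by
    rcases isEmpty_or_nonempty ι with hι | hι
    · simp
    · rw [sum_sub_distrib, sum_const, card_univ, ← Nat.cast_smul_eq_nsmul ℝ, smul_smul,
        mul_one_div_cancel (Nat.cast_ne_zero.mpr Fintype.card_ne_zero), one_smul, sub_self]
  have hcross : ∑ i, ⟪x i - m, m - c⟫_ℝ = 0 := by
    rw [← sum_inner, hcentred, inner_zero_left]
  have hsplit : ∑ i, ‖x i - c‖ ^ 2 = ∑ i, ‖x i - m‖ ^ 2 + Fintype.card ι * ‖m - c‖ ^ 2 := by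
    simp only [← sub_add_sub_cancel (x _) m c, norm_add_sq_real, sum_add_distrib, ← mul_sum,
      hcross, sum_const, card_univ, nsmul_eq_mul]
    ring
  rw [hsplit]
  exact le_add_of_nonneg_right (by positivity)

theorem norm_average_le [Nonempty ι] {x : ι → E} {B : ℝ} (h : ∀ i, ‖x i‖ ≤ B) :
    ‖(1 / (Fintype.card ι : ℝ)) • ∑ i, x i‖ ≤ B := by
  have hcard : (0 : ℝ) < Fintype.card ι := Nat.cast_pos.mpr Fintype.card_pos
  calc ‖(1 / (Fintype.card ι : ℝ)) • ∑ i, x i‖ ≤ 1 / (Fintype.card ι : ℝ) * ∑ _i : ι, B := by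
        rw [norm_smul, Real.norm_of_nonneg (by positivity)]
        gcongr
        exact norm_sum_le_of_le _ fun i _ => h i
    _ = B := by
      rw [sum_const, card_univ, nsmul_eq_mul]
      field_simp

theorem average_norm_sub_average_sq_le {n : ℕ} (x : Fin n → E) (c : E) {p q r : Fin n → ℝ}
    {K P Q R : ℝ} (h : ∀ i, ‖x i - c‖ ≤ 2 * (p i + q i) + K * r i)
    (hp : (1 / n : ℝ) * ∑ i, p i ^ 2 ≤ P) (hq : (1 / n : ℝ) * ∑ i, q i ^ 2 ≤ Q)
    (hr : (1 / n : ℝ) * ∑ i, r i ^ 2 ≤ R) :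
    (1 / n : ℝ) * ∑ i, ‖x i - (1 / n : ℝ) • ∑ j, x j‖ ^ 2 ≤ 12 * P + 12 * Q + 3 * K ^ 2 * R := by
  have hvar := sum_norm_sub_average_sq_le x c
  rw [Fintype.card_fin] at hvar
  calc _ ≤ (1 / n : ℝ) * ∑ i, ‖x i - c‖ ^ 2 := mul_le_mul_of_nonneg_left hvar (by positivity)
    _ ≤ (1 / n : ℝ) * ∑ i, (2 * p i + 2 * q i + K * r i) ^ 2 := by
      gcongr with i
      linarith [h i]
    _ ≤ (1 / n : ℝ) * (3 * (∑ i, (2 * p i) ^ 2 + ∑ i, (2 * q i) ^ 2 + ∑ i, (K * r i) ^ 2)) := by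
      gcongr
      exact sum_add_add_sq_le _ _ _ _
    _ = 12 * ((1 / n : ℝ) * ∑ i, p i ^ 2) + 12 * ((1 / n : ℝ) * ∑ i, q i ^ 2) +
        3 * K ^ 2 * ((1 / n : ℝ) * ∑ i, r i ^ 2) := by
      simp only [mul_pow, ← mul_sum]
      ring
    _ ≤ 12 * P + 12 * Q + 3 * K ^ 2 * R := by gcongr

end Averages

theorem ContinuousLinearMap.norm_comp_sub_comp_le {𝕜 E F G : Type*} [NontriviallyNormedField 𝕜]
    [SeminormedAddCommGroup E] [SeminormedAddCommGroup F] [SeminormedAddCommGroup G]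
    [NormedSpace 𝕜 E] [NormedSpace 𝕜 F] [NormedSpace 𝕜 G] (A A' : F →L[𝕜] G) (P P' : E →L[𝕜] F) :
    ‖A.comp P - A'.comp P'‖ ≤ ‖A - A'‖ * ‖P‖ + ‖A'‖ * ‖P - P'‖ :=
  calc ‖A.comp P - A'.comp P'‖ = ‖(A - A').comp P + A'.comp (P - P')‖ := by
        rw [sub_comp, comp_sub, sub_add_sub_cancel]
    _ ≤ ‖(A - A').comp P‖ + ‖A'.comp (P - P')‖ := norm_add_le _ _
    _ ≤ ‖A - A'‖ * ‖P‖ + ‖A'‖ * ‖P - P'‖ := add_le_add (opNorm_comp_le _ _) (opNorm_comp_le _ _)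

section Gradient

variable {E : Type*} [NormedAddCommGroup E] [InnerProductSpace ℝ E] [CompleteSpace E]

theorem norm_fderiv_sub_fderiv (g h : E → ℝ) (x y : E) :
    ‖fderiv ℝ g x - fderiv ℝ h y‖ = ‖gradient g x - gradient h y‖ := by
  rw [← toDual_gradient, ← toDual_gradient, ← map_sub, LinearIsometryEquiv.norm_map]

theorem ContDiff.differentiable_gradient {g : E → ℝ} {n : WithTop ℕ∞} (hg : ContDiff ℝ n g)
    (hn : 2 ≤ n) : Differentiable ℝ (gradient g) :=
  ((toDual ℝ E).symm.contDiff.comp (hg.fderiv_right (m := 1) hn)).differentiable one_ne_zero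

theorem gradient_const_mul_sum {ι : Type*} (s : Finset ι) (c : ℝ) {g : ι → E → ℝ} {x : E}
    (hg : ∀ i ∈ s, DifferentiableAt ℝ (g i) x) :
    gradient (fun v => c * ∑ i ∈ s, g i v) x = c • ∑ i ∈ s, gradient (g i) x := by
  rw [gradient, ((HasFDerivAt.fun_sum fun i hi => (hg i hi).hasFDerivAt).const_mul c).fderiv,
    map_smul, map_sum]
  rfl

noncomputable def mamlObjective (α : ℝ) (g : E → ℝ) (v : E) : ℝ := g (v - α • gradient g v)

theorem hasFDerivAt_mamlObjective {α : ℝ} {g : E → ℝ} {w : E}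
    (hg : DifferentiableAt ℝ g (w - α • gradient g w)) (hgg : DifferentiableAt ℝ (gradient g) w) :
    HasFDerivAt (mamlObjective α g) ((fderiv ℝ g (w - α • gradient g w)).comp
      (ContinuousLinearMap.id ℝ E - α • fderiv ℝ (gradient g) w)) w :=
  hg.hasFDerivAt.comp w ((hasFDerivAt_id w).sub (hgg.hasFDerivAt.const_smul α))

theorem norm_gradient_mamlObjective_sub_le {g h : E → ℝ} {L B α : ℝ} {w : E}
    (hg : DifferentiableAt ℝ g (w - α • gradient g w)) (hgg : DifferentiableAt ℝ (gradient g) w)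
    (hh : DifferentiableAt ℝ h (w - α • gradient h w)) (hhh : DifferentiableAt ℝ (gradient h) w)
    (hL : 0 ≤ L) (hgL : ∀ x y, ‖gradient g x - gradient g y‖ ≤ L * ‖x - y‖)
    (hB : ‖gradient h (w - α • gradient h w)‖ ≤ B) (hα : 0 ≤ α) (hαL : α * L ≤ 1) :
    ‖gradient (mamlObjective α g) w - gradient (mamlObjective α h) w‖ ≤
      2 * (‖gradient g w - gradient h w‖ +
        ‖gradient g (w - α • gradient h w) - gradient h (w - α • gradient h w)‖) +
      B * α * ‖fderiv ℝ (gradient g) w - fderiv ℝ (gradient h) w‖ := by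
  set u := w - α • gradient h w
  have hA : ‖fderiv ℝ g (w - α • gradient g w) - fderiv ℝ h u‖ ≤
      ‖gradient g w - gradient h w‖ + ‖gradient g u - gradient h u‖ := by
    rw [norm_fderiv_sub_fderiv]
    refine (norm_sub_le_norm_sub_add_norm_sub _ (gradient g u) _).trans (add_le_add_left ?_ _)
    calc ‖gradient g (w - α • gradient g w) - gradient g u‖
        ≤ L * ‖(w - α • gradient g w) - u‖ := hgL _ _
      _ = α * L * ‖gradient g w - gradient h w‖ := by
        rw [sub_sub_sub_cancel_left, ← smul_sub, norm_smul, Real.norm_of_nonneg hα, norm_sub_rev]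
        ring
      _ ≤ ‖gradient g w - gradient h w‖ := mul_le_of_le_one_left (norm_nonneg _) hαL
  have hP : ‖ContinuousLinearMap.id ℝ E - α • fderiv ℝ (gradient g) w‖ ≤ 2 := by
    have hH : ‖fderiv ℝ (gradient g) w‖ ≤ L :=
      norm_fderiv_le_of_lip' ℝ hL (Filter.Eventually.of_forall fun x => hgL x w)
    calc _ ≤ ‖ContinuousLinearMap.id ℝ E‖ + α * ‖fderiv ℝ (gradient g) w‖ := by
          refine (norm_sub_le _ _).trans_eq ?_
          rw [norm_smul, Real.norm_of_nonneg hα]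
      _ ≤ 1 + α * L := by gcongr; exact ContinuousLinearMap.norm_id_le
      _ ≤ 2 := by linarith
  have hA' : ‖fderiv ℝ h u‖ ≤ B := by rwa [← toDual_gradient, LinearIsometryEquiv.norm_map]
  have hP' : ‖(ContinuousLinearMap.id ℝ E - α • fderiv ℝ (gradient g) w) -
      (ContinuousLinearMap.id ℝ E - α • fderiv ℝ (gradient h) w)‖ =
      α * ‖fderiv ℝ (gradient g) w - fderiv ℝ (gradient h) w‖ := by
    rw [sub_sub_sub_cancel_left, ← smul_sub, norm_smul, Real.norm_of_nonneg hα, norm_sub_rev]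
  rw [gradient, gradient, (hasFDerivAt_mamlObjective hg hgg).fderiv,
    (hasFDerivAt_mamlObjective hh hhh).fderiv, ← map_sub, LinearIsometryEquiv.norm_map]
  calc _ ≤ _ := ContinuousLinearMap.norm_comp_sub_comp_le _ _ _ _
    _ ≤ (‖gradient g w - gradient h w‖ + ‖gradient g u - gradient h u‖) * 2 +
        B * (α * ‖fderiv ℝ (gradient g) w - fderiv ℝ (gradient h) w‖) := by
      rw [hP']
      exact add_le_add (mul_le_mul hA hP (norm_nonneg _) (by positivity))
        (mul_le_mul_of_nonneg_right hA' (by positivity))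
    _ = _ := by ring

end Gradient

theorem stmt_1_general {d n : ℕ} (f : Fin n → EuclideanSpace ℝ (Fin d) → ℝ)
    (L B γG γH α : ℝ)
    (hf : ∀ i, ContDiff ℝ 2 (f i))
    (hsmooth : ∀ i w u, ‖gradient (f i) w - gradient (f i) u‖ ≤ L * ‖w - u‖)
    (hB : ∀ i w, ‖gradient (f i) w‖ ≤ B)
    (hG : ∀ w, (1 / n : ℝ) * ∑ i, ‖gradient (f i) w -
        gradient (fun v => (1 / n : ℝ) * ∑ j, f j v) w‖ ^ 2 ≤ γG ^ 2)
    (hH : ∀ w, (1 / n : ℝ) * ∑ i, ‖fderiv ℝ (gradient (f i)) w -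
        fderiv ℝ (gradient (fun v => (1 / n : ℝ) * ∑ j, f j v)) w‖ ^ 2 ≤ γH ^ 2)
    (hα0 : 0 ≤ α) (hαL : α ≤ 1 / L) :
    ∀ w : EuclideanSpace ℝ (Fin d),
      (1 / n : ℝ) * ∑ i, ‖gradient (fun v => f i (v - α • gradient (f i) v)) w -
          gradient (fun v => (1 / n : ℝ) * ∑ j, f j (v - α • gradient (f j) v)) w‖ ^ 2 ≤
        3 * B ^ 2 * α ^ 2 * γH ^ 2 + 192 * γG ^ 2 := by
  intro w
  have hL : 0 ≤ L := one_div_nonneg.mp (hα0.trans hαL)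
  have hαL' : α * L ≤ 1 := mul_le_of_le_div₀ zero_le_one hL hαL
  set fbar : EuclideanSpace ℝ (Fin d) → ℝ := fun v => (1 / n : ℝ) * ∑ j, f j v with hfbar
  set u := w - α • gradient fbar w
  have hfbar_smooth : ContDiff ℝ 2 fbar := by fun_prop
  have hfbar_bdd (i : Fin n) : ‖gradient fbar u‖ ≤ B := by
    have : Nonempty (Fin n) := ⟨i⟩
    rw [hfbar, gradient_const_mul_sum _ _ fun j _ => (hf j).differentiable two_ne_zero u]
    simpa using norm_average_le fun j => hB j u
  have hstep (i : Fin n) := norm_gradient_mamlObjective_sub_le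
    ((hf i).differentiable two_ne_zero _) ((hf i).differentiable_gradient le_rfl w)
    (hfbar_smooth.differentiable two_ne_zero _) (hfbar_smooth.differentiable_gradient le_rfl w)
    hL (hsmooth i) (hfbar_bdd i) hα0 hαL'
  change (1 / n : ℝ) * ∑ i, ‖gradient (mamlObjective α (f i)) w -
    gradient (fun v => (1 / n : ℝ) * ∑ j, mamlObjective α (f j) v) w‖ ^ 2 ≤ _
  rw [gradient_const_mul_sum _ _ fun j _ => (hasFDerivAt_mamlObjective
    ((hf j).differentiable two_ne_zero _) ((hf j).differentiable_gradient le_rfl w)).differentiableAt]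
  calc _ ≤ 12 * γG ^ 2 + 12 * γG ^ 2 + 3 * (B * α) ^ 2 * γH ^ 2 :=
        average_norm_sub_average_sq_le _ _ hstep (hG w) (hG u) (hH w)
    _ ≤ 3 * B ^ 2 * α ^ 2 * γH ^ 2 + 192 * γG ^ 2 := by nlinarith [sq_nonneg γG]

/-- With `F_i w := f_i (w - α ∇f_i w)` and `F := (1/n) ∑ F_i`, under `L`-smoothness,
gradient bound `B`, `ρ`-Lipschitz Hessians and the task-similarity conditions with
parameters `γ_G, γ_H`, for every `α ∈ [0, 1/L]` and every `w`,
`(1/n) ∑ᵢ ‖∇F_i(w) - ∇F(w)‖² ≤ 3B²α²γ_H² + 192γ_G²`. -/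
theorem stmt_1 {d n : ℕ} (hn : 0 < n) (f : Fin n → EuclideanSpace ℝ (Fin d) → ℝ)
    (L B ρ γG γH α : ℝ)
    (hf : ∀ i, ContDiff ℝ 2 (f i))
    (hsmooth : ∀ i w u, ‖gradient (f i) w - gradient (f i) u‖ ≤ L * ‖w - u‖)
    (hB : ∀ i w, ‖gradient (f i) w‖ ≤ B)
    (hρ : ∀ i w u, ‖fderiv ℝ (gradient (f i)) w - fderiv ℝ (gradient (f i)) u‖ ≤ ρ * ‖w - u‖)
    (hG : ∀ w, (1 / n : ℝ) * ∑ i, ‖gradient (f i) w -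
        gradient (fun v => (1 / n : ℝ) * ∑ j, f j v) w‖ ^ 2 ≤ γG ^ 2)
    (hH : ∀ w, (1 / n : ℝ) * ∑ i, ‖fderiv ℝ (gradient (f i)) w -
        fderiv ℝ (gradient (fun v => (1 / n : ℝ) * ∑ j, f j v)) w‖ ^ 2 ≤ γH ^ 2)
    (hα0 : 0 ≤ α) (hαL : α ≤ 1 / L) :
    ∀ w : EuclideanSpace ℝ (Fin d),
      (1 / n : ℝ) * ∑ i, ‖gradient (fun v => f i (v - α • gradient (f i) v)) w -
          gradient (fun v => (1 / n : ℝ) * ∑ j, f j (v - α • gradient (f j) v)) w‖ ^ 2 ≤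
        3 * B ^ 2 * α ^ 2 * γH ^ 2 + 192 * γG ^ 2 :=
  stmt_1_general f L B γG γH α hf hsmooth hB hG hH hα0 hαL
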